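/- arXiv:math/9812140 — 6 statements merged into one kernel-verified Lean document; each statement's English description precedes it below -/
import Mathlib

section
/- Let q > 0 be a real number. The deformed two-mode annihilation operators q-commute among themselves and the deformed creation operators q-commute among themselves: A↓ ∘ A↑ = q • (A↑ ∘ A↓) and A⁺_↑ ∘ A⁺_↓ = q • (A⁺_↓ ∘ A⁺_↑) as operators on the two-mode bosonic Fock space. -/
/-! Only the factor `qⁿ` in the ↑-mode operators fails to commute with the ↓-mode operators: on a
basis vector, `A↓ ∘ A↑` picks up `q^(n+1)` where `A↑ ∘ A↓` picks up `qⁿ`, and dually for the creators.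
The square roots of the q-numbers are inert coefficients, so the relations hold for arbitrary
coefficient sequences over any commutative semiring. -/

open Finsupp

namespace TwoModeFock

variable {R : Type*} [CommSemiring R] (q : R) (α β : ℕ → R)
  {a b : ((ℕ × ℕ) →₀ R) →ₗ[R] ((ℕ × ℕ) →₀ R)}

theorem annihilators_qCommute
    (ha0 : ∀ n, a (single (0, n) 1) = 0)
    (ha : ∀ m n, a (single (m + 1, n) 1) = (α m * q ^ n) • single (m, n) 1)
    (hb0 : ∀ m, b (single (m, 0) 1) = 0)
    (hb : ∀ m n, b (single (m, n + 1) 1) = β n • single (m, n) 1) :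
    b ∘ₗ a = q • (a ∘ₗ b) := by
  refine Finsupp.basisSingleOne.ext fun ⟨m, n⟩ => ?_
  rcases m with _ | m <;> rcases n with _ | n <;>
    simp only [coe_basisSingleOne, LinearMap.comp_apply, LinearMap.smul_apply, ha0, ha, hb0, hb,
      map_smul, map_zero, smul_zero, smul_smul]
  congr 1
  ring

theorem creators_qCommute
    (ha : ∀ m n, a (single (m, n) 1) = (α m * q ^ n) • single (m + 1, n) 1)
    (hb : ∀ m n, b (single (m, n) 1) = β n • single (m, n + 1) 1) :
    a ∘ₗ b = q • (b ∘ₗ a) := by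
  refine Finsupp.basisSingleOne.ext fun ⟨m, n⟩ => ?_
  simp only [coe_basisSingleOne, LinearMap.comp_apply, LinearMap.smul_apply, ha, hb, map_smul,
    smul_smul]
  congr 1
  ring

end TwoModeFock

theorem deformed_two_mode_q_commutation_general
    (q : ℝ)
    (Au Ad Apu Apd : ((ℕ × ℕ) →₀ ℝ) →ₗ[ℝ] ((ℕ × ℕ) →₀ ℝ))
    (hAu0 : ∀ n : ℕ, Au (Finsupp.single (0, n) 1) = 0)
    (hAu : ∀ m n : ℕ, Au (Finsupp.single (m + 1, n) 1) =
      (Real.sqrt (∑ k ∈ Finset.range (m + 1), q ^ (2 * k)) * q ^ n) •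
        Finsupp.single (m, n) 1)
    (hApu : ∀ m n : ℕ, Apu (Finsupp.single (m, n) 1) =
      (Real.sqrt (∑ k ∈ Finset.range (m + 1), q ^ (2 * k)) * q ^ n) •
        Finsupp.single (m + 1, n) 1)
    (hAd0 : ∀ m : ℕ, Ad (Finsupp.single (m, 0) 1) = 0)
    (hAd : ∀ m n : ℕ, Ad (Finsupp.single (m, n + 1) 1) =
      Real.sqrt (∑ k ∈ Finset.range (n + 1), q ^ (2 * k)) • Finsupp.single (m, n) 1)
    (hApd : ∀ m n : ℕ, Apd (Finsupp.single (m, n) 1) =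
      Real.sqrt (∑ k ∈ Finset.range (n + 1), q ^ (2 * k)) • Finsupp.single (m, n + 1) 1) :
    Ad ∘ₗ Au = q • (Au ∘ₗ Ad) ∧ Apu ∘ₗ Apd = q • (Apd ∘ₗ Apu) := by
  let sqrtQNum : ℕ → ℝ := fun m => Real.sqrt (∑ k ∈ Finset.range (m + 1), q ^ (2 * k))
  exact ⟨TwoModeFock.annihilators_qCommute q sqrtQNum sqrtQNum hAu0 hAu hAd0 hAd,
    TwoModeFock.creators_qCommute q sqrtQNum sqrtQNum hApu hApd⟩

/-- **q-commutation among the deformed two-mode annihilators / creators.**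
For `q > 0`, Fiore's deformed operators on the two-mode bosonic Fock space
`(ℕ × ℕ) →₀ ℝ`, defined on the standard basis `e_{m,n}` (with `(n)_{q²} = ∑_{k<n} q^{2k}`) by
`A⁺_↑ e_{m,n} = √((m+1)_{q²}) qⁿ e_{m+1,n}`, `A↑ e_{m,n} = √((m)_{q²}) qⁿ e_{m-1,n}`,
`A⁺_↓ e_{m,n} = √((n+1)_{q²}) e_{m,n+1}`, `A↓ e_{m,n} = √((n)_{q²}) e_{m,n-1}`,
satisfy `A↓ ∘ A↑ = q • (A↑ ∘ A↓)` and `A⁺_↑ ∘ A⁺_↓ = q • (A⁺_↓ ∘ A⁺_↑)`. -/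
theorem deformed_two_mode_q_commutation
    (q : ℝ) (hq : 0 < q)
    (Au Ad Apu Apd : ((ℕ × ℕ) →₀ ℝ) →ₗ[ℝ] ((ℕ × ℕ) →₀ ℝ))
    (hAu0 : ∀ n : ℕ, Au (Finsupp.single (0, n) 1) = 0)
    (hAu : ∀ m n : ℕ, Au (Finsupp.single (m + 1, n) 1) =
      (Real.sqrt (∑ k ∈ Finset.range (m + 1), q ^ (2 * k)) * q ^ n) •
        Finsupp.single (m, n) 1)
    (hApu : ∀ m n : ℕ, Apu (Finsupp.single (m, n) 1) =
      (Real.sqrt (∑ k ∈ Finset.range (m + 1), q ^ (2 * k)) * q ^ n) •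
        Finsupp.single (m + 1, n) 1)
    (hAd0 : ∀ m : ℕ, Ad (Finsupp.single (m, 0) 1) = 0)
    (hAd : ∀ m n : ℕ, Ad (Finsupp.single (m, n + 1) 1) =
      Real.sqrt (∑ k ∈ Finset.range (n + 1), q ^ (2 * k)) • Finsupp.single (m, n) 1)
    (hApd : ∀ m n : ℕ, Apd (Finsupp.single (m, n) 1) =
      Real.sqrt (∑ k ∈ Finset.range (n + 1), q ^ (2 * k)) • Finsupp.single (m, n + 1) 1) :
    Ad ∘ₗ Au = q • (Au ∘ₗ Ad) ∧ Apu ∘ₗ Apd = q • (Apd ∘ₗ Apu) :=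
  deformed_two_mode_q_commutation_general q Au Ad Apu Apd hAu0 hAu hApu hAd0 hAd hApd
end

section
/- Let q > 0 be a real number. The deformed creation and annihilation operators of different modes satisfy the q-exchange relations A↑ ∘ A⁺_↓ = q • (A⁺_↓ ∘ A↑) and A↓ ∘ A⁺_↑ = q • (A⁺_↑ ∘ A↓) as operators on the two-mode bosonic Fock space. -/
open Finsupp

section QExchange

variable {R : Type*} [CommSemiring R] (q : R) (a b : ℕ → R)
  (L U : ((ℕ × ℕ) →₀ R) →ₗ[R] ((ℕ × ℕ) →₀ R))

/-- The `q` comes from the factor `q ^ n` in the first-mode lowering operator: it sees the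
second-mode occupation one higher after the raising than before it. -/
theorem lowerFst_comp_raiseSnd
    (hL0 : ∀ n, L (single (0, n) 1) = 0)
    (hL : ∀ m n, L (single (m + 1, n) 1) = (a m * q ^ n) • single (m, n) 1)
    (hU : ∀ m n, U (single (m, n) 1) = b n • single (m, n + 1) 1) :
    L ∘ₗ U = q • (U ∘ₗ L) := by
  refine Finsupp.basisSingleOne.ext fun ⟨m, n⟩ => ?_
  simp only [coe_basisSingleOne, LinearMap.comp_apply, LinearMap.smul_apply, hU, map_smul]
  cases m with
  | zero => simp only [hL0, smul_zero, map_zero]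
  | succ m =>
    simp only [hL, hU, smul_smul, map_smul]
    congr 1
    ring

theorem lowerSnd_comp_raiseFst
    (hL0 : ∀ m, L (single (m, 0) 1) = 0)
    (hL : ∀ m n, L (single (m, n + 1) 1) = b n • single (m, n) 1)
    (hU : ∀ m n, U (single (m, n) 1) = (a m * q ^ n) • single (m + 1, n) 1) :
    L ∘ₗ U = q • (U ∘ₗ L) := by
  refine Finsupp.basisSingleOne.ext fun ⟨m, n⟩ => ?_
  simp only [coe_basisSingleOne, LinearMap.comp_apply, LinearMap.smul_apply, hU, map_smul]
  cases n with
  | zero => simp only [hL0, smul_zero, map_zero]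
  | succ n =>
    simp only [hL, hU, smul_smul, map_smul]
    congr 1
    ring

end QExchange

theorem deformed_two_mode_q_exchange_general
    (q : ℝ)
    (Au Ad Apu Apd : ((ℕ × ℕ) →₀ ℝ) →ₗ[ℝ] ((ℕ × ℕ) →₀ ℝ))
    (hAu0 : ∀ n : ℕ, Au (Finsupp.single (0, n) 1) = 0)
    (hAu : ∀ m n : ℕ, Au (Finsupp.single (m + 1, n) 1) =
      (Real.sqrt (∑ k ∈ Finset.range (m + 1), q ^ (2 * k)) * q ^ n) •
        Finsupp.single (m, n) 1)
    (hApu : ∀ m n : ℕ, Apu (Finsupp.single (m, n) 1) =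
      (Real.sqrt (∑ k ∈ Finset.range (m + 1), q ^ (2 * k)) * q ^ n) •
        Finsupp.single (m + 1, n) 1)
    (hAd0 : ∀ m : ℕ, Ad (Finsupp.single (m, 0) 1) = 0)
    (hAd : ∀ m n : ℕ, Ad (Finsupp.single (m, n + 1) 1) =
      Real.sqrt (∑ k ∈ Finset.range (n + 1), q ^ (2 * k)) • Finsupp.single (m, n) 1)
    (hApd : ∀ m n : ℕ, Apd (Finsupp.single (m, n) 1) =
      Real.sqrt (∑ k ∈ Finset.range (n + 1), q ^ (2 * k)) • Finsupp.single (m, n + 1) 1) :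
    Au ∘ₗ Apd = q • (Apd ∘ₗ Au) ∧ Ad ∘ₗ Apu = q • (Apu ∘ₗ Ad) :=
  ⟨lowerFst_comp_raiseSnd q _ _ Au Apd hAu0 hAu hApd,
    lowerSnd_comp_raiseFst q _ _ Ad Apu hAd0 hAd hApu⟩

/-- **q-exchange relations between deformed operators of different modes.**
For `q > 0`, Fiore's deformed operators on the two-mode bosonic Fock space
satisfy `A↑ ∘ A⁺_↓ = q • (A⁺_↓ ∘ A↑)` and `A↓ ∘ A⁺_↑ = q • (A⁺_↑ ∘ A↓)`. -/
theorem deformed_two_mode_q_exchange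
    (q : ℝ) (hq : 0 < q)
    (Au Ad Apu Apd : ((ℕ × ℕ) →₀ ℝ) →ₗ[ℝ] ((ℕ × ℕ) →₀ ℝ))
    (hAu0 : ∀ n : ℕ, Au (Finsupp.single (0, n) 1) = 0)
    (hAu : ∀ m n : ℕ, Au (Finsupp.single (m + 1, n) 1) =
      (Real.sqrt (∑ k ∈ Finset.range (m + 1), q ^ (2 * k)) * q ^ n) •
        Finsupp.single (m, n) 1)
    (hApu : ∀ m n : ℕ, Apu (Finsupp.single (m, n) 1) =
      (Real.sqrt (∑ k ∈ Finset.range (m + 1), q ^ (2 * k)) * q ^ n) •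
        Finsupp.single (m + 1, n) 1)
    (hAd0 : ∀ m : ℕ, Ad (Finsupp.single (m, 0) 1) = 0)
    (hAd : ∀ m n : ℕ, Ad (Finsupp.single (m, n + 1) 1) =
      Real.sqrt (∑ k ∈ Finset.range (n + 1), q ^ (2 * k)) • Finsupp.single (m, n) 1)
    (hApd : ∀ m n : ℕ, Apd (Finsupp.single (m, n) 1) =
      Real.sqrt (∑ k ∈ Finset.range (n + 1), q ^ (2 * k)) • Finsupp.single (m, n + 1) 1) :
    Au ∘ₗ Apd = q • (Apd ∘ₗ Au) ∧ Ad ∘ₗ Apu = q • (Apu ∘ₗ Ad) :=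
  deformed_two_mode_q_exchange_general q Au Ad Apu Apd hAu0 hAu hApu hAd0 hAd hApd
end

section
/- Let q > 0 be a real number. The up-mode deformed operators satisfy the inhomogeneous q-deformed relation A↑ ∘ A⁺_↑ = Id + q² • (A⁺_↑ ∘ A↑) + (q² − 1) • (A⁺_↓ ∘ A↓) as operators on the two-mode bosonic Fock space; together with the other exchange relations this shows the deformed operators satisfy the U_q(sl(2))-covariant deformed commutation relations of the q-deformed two-dimensional Weyl algebra. -/
/-!
Every composite in the relation acts diagonally on the basis vector `e_{m,n}`: `A↑ A⁺_↑` by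
`(m+1)_{q²} q^{2n}`, `A⁺_↑ A↑` by `(m)_{q²} q^{2n}` and `A⁺_↓ A↓` by `(n)_{q²}`. The relation thus
reduces to `(m+1)_{q²} q^{2n} = 1 + q² (m)_{q²} q^{2n} + (q² - 1) (n)_{q²}`, which combines
`(m+1)_{q²} = 1 + q² (m)_{q²}` with `(q² - 1) (n)_{q²} = q^{2n} - 1`.
-/

open Finset

theorem geom_sum_succ_mul_pow {R : Type*} [CommRing R] (x : R) (a b : ℕ) :
    (∑ k ∈ range (a + 1), x ^ k) * x ^ b
      = 1 + x * ((∑ k ∈ range a, x ^ k) * x ^ b) + (x - 1) * ∑ k ∈ range b, x ^ k := by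
  linear_combination x ^ b * geom_sum_succ (x := x) (n := a) - geom_sum_mul x b

theorem LinearMap.apply_apply_eq_mul_smul_of_eq_smul {R M : Type*} [Semiring R]
    [AddCommMonoid M] [Module R M] {f g : M →ₗ[R] M} {u v : M} {c : R}
    (hg : g u = c • v) (hf : f v = c • u) : f (g u) = (c * c) • u := by
  rw [hg, map_smul, hf, smul_smul]

def qSqNumber (q : ℝ) (n : ℕ) : ℝ := ∑ k ∈ range n, q ^ (2 * k)

section qSqNumber

variable (q : ℝ)

@[simp]
theorem qSqNumber_zero : qSqNumber q 0 = 0 := rfl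

theorem qSqNumber_nonneg (n : ℕ) : 0 ≤ qSqNumber q n :=
  sum_nonneg fun k _ => by rw [pow_mul]; positivity

theorem qSqNumber_succ_mul_pow (a b : ℕ) :
    qSqNumber q (a + 1) * q ^ (2 * b)
      = 1 + q ^ 2 * (qSqNumber q a * q ^ (2 * b)) + (q ^ 2 - 1) * qSqNumber q b := by
  simp only [qSqNumber, pow_mul]
  exact geom_sum_succ_mul_pow (q ^ 2) a b

theorem sqrt_qSqNumber_mul_self (n : ℕ) : √(qSqNumber q n) * √(qSqNumber q n) = qSqNumber q n :=
  Real.mul_self_sqrt (qSqNumber_nonneg q n)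

theorem sqrt_qSqNumber_mul_pow_mul_self (m n : ℕ) :
    (√(qSqNumber q m) * q ^ n) * (√(qSqNumber q m) * q ^ n) = qSqNumber q m * q ^ (2 * n) := by
  rw [mul_mul_mul_comm, sqrt_qSqNumber_mul_self, ← pow_add, two_mul]

end qSqNumber

theorem deformed_up_mode_ccr_general
    (q : ℝ)
    (Au Ad Apu Apd : ((ℕ × ℕ) →₀ ℝ) →ₗ[ℝ] ((ℕ × ℕ) →₀ ℝ))
    (hAu0 : ∀ n : ℕ, Au (Finsupp.single (0, n) 1) = 0)
    (hAu : ∀ m n : ℕ, Au (Finsupp.single (m + 1, n) 1) =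
      (Real.sqrt (∑ k ∈ Finset.range (m + 1), q ^ (2 * k)) * q ^ n) •
        Finsupp.single (m, n) 1)
    (hApu : ∀ m n : ℕ, Apu (Finsupp.single (m, n) 1) =
      (Real.sqrt (∑ k ∈ Finset.range (m + 1), q ^ (2 * k)) * q ^ n) •
        Finsupp.single (m + 1, n) 1)
    (hAd0 : ∀ m : ℕ, Ad (Finsupp.single (m, 0) 1) = 0)
    (hAd : ∀ m n : ℕ, Ad (Finsupp.single (m, n + 1) 1) =
      Real.sqrt (∑ k ∈ Finset.range (n + 1), q ^ (2 * k)) • Finsupp.single (m, n) 1)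
    (hApd : ∀ m n : ℕ, Apd (Finsupp.single (m, n) 1) =
      Real.sqrt (∑ k ∈ Finset.range (n + 1), q ^ (2 * k)) • Finsupp.single (m, n + 1) 1) :
    Au ∘ₗ Apu = LinearMap.id + q ^ 2 • (Apu ∘ₗ Au) + (q ^ 2 - 1) • (Apd ∘ₗ Ad) := by
  simp only [← qSqNumber.eq_1] at hAu hApu hAd hApd
  refine Finsupp.basisSingleOne.ext fun ⟨m, n⟩ => ?_
  have raise_lower_up : Au (Apu (Finsupp.single (m, n) 1))
      = (qSqNumber q (m + 1) * q ^ (2 * n)) • Finsupp.single (m, n) 1 := by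
    rw [LinearMap.apply_apply_eq_mul_smul_of_eq_smul (hApu m n) (hAu m n),
      sqrt_qSqNumber_mul_pow_mul_self]
  have lower_raise_up : Apu (Au (Finsupp.single (m, n) 1))
      = (qSqNumber q m * q ^ (2 * n)) • Finsupp.single (m, n) 1 := by
    cases m with
    | zero => simp [hAu0]
    | succ m =>
      rw [LinearMap.apply_apply_eq_mul_smul_of_eq_smul (hAu m n) (hApu m n),
        sqrt_qSqNumber_mul_pow_mul_self]
  have lower_raise_down : Apd (Ad (Finsupp.single (m, n) 1))
      = qSqNumber q n • Finsupp.single (m, n) 1 := by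
    cases n with
    | zero => simp [hAd0]
    | succ n =>
      rw [LinearMap.apply_apply_eq_mul_smul_of_eq_smul (hAd m n) (hApd m n),
        sqrt_qSqNumber_mul_self]
  simp only [Finsupp.coe_basisSingleOne, LinearMap.comp_apply, LinearMap.add_apply,
    LinearMap.smul_apply, LinearMap.id_apply, raise_lower_up, lower_raise_up,
    lower_raise_down, qSqNumber_succ_mul_pow, smul_smul, add_smul, one_smul]

/-- **Inhomogeneous q-deformed relation for the up mode.**
For `q > 0`, Fiore's deformed operators on the two-mode bosonic Fock space
satisfy `A↑ ∘ A⁺_↑ = Id + q² • (A⁺_↑ ∘ A↑) + (q² − 1) • (A⁺_↓ ∘ A↓)`,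
completing the U_q(sl(2))-covariant deformed commutation relations of the
q-deformed two-dimensional Weyl algebra. -/
theorem deformed_up_mode_ccr
    (q : ℝ) (hq : 0 < q)
    (Au Ad Apu Apd : ((ℕ × ℕ) →₀ ℝ) →ₗ[ℝ] ((ℕ × ℕ) →₀ ℝ))
    (hAu0 : ∀ n : ℕ, Au (Finsupp.single (0, n) 1) = 0)
    (hAu : ∀ m n : ℕ, Au (Finsupp.single (m + 1, n) 1) =
      (Real.sqrt (∑ k ∈ Finset.range (m + 1), q ^ (2 * k)) * q ^ n) •
        Finsupp.single (m, n) 1)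
    (hApu : ∀ m n : ℕ, Apu (Finsupp.single (m, n) 1) =
      (Real.sqrt (∑ k ∈ Finset.range (m + 1), q ^ (2 * k)) * q ^ n) •
        Finsupp.single (m + 1, n) 1)
    (hAd0 : ∀ m : ℕ, Ad (Finsupp.single (m, 0) 1) = 0)
    (hAd : ∀ m n : ℕ, Ad (Finsupp.single (m, n + 1) 1) =
      Real.sqrt (∑ k ∈ Finset.range (n + 1), q ^ (2 * k)) • Finsupp.single (m, n) 1)
    (hApd : ∀ m n : ℕ, Apd (Finsupp.single (m, n) 1) =
      Real.sqrt (∑ k ∈ Finset.range (n + 1), q ^ (2 * k)) • Finsupp.single (m, n + 1) 1) :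
    Au ∘ₗ Apu = LinearMap.id + q ^ 2 • (Apu ∘ₗ Au) + (q ^ 2 - 1) • (Apd ∘ₗ Ad) :=
  deformed_up_mode_ccr_general q Au Ad Apu Apd hAu0 hAu hApu hAd0 hAd hApd
end

section
/- Let q > 0 be a real number. The deformed quadratic U_q(sl(2))-invariant I¹_h = A⁺_↑ ∘ A↑ + A⁺_↓ ∘ A↓ acts diagonally on the two-mode Fock basis with eigenvalue the q²-number of the total undeformed occupation number: (A⁺_↑ ∘ A↑ + A⁺_↓ ∘ A↓) e_{m,n} = (m+n)_{q²} • e_{m,n}. In particular the deformed invariant I¹_h is a (non-polynomial) function of the undeformed sl(2)-invariant total number operator, illustrating that deformed and undeformed invariant subalgebras coincide while the invariants themselves differ. -/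
/-!
On `e_{m,n}` the two terms of `A⁺_↑ ∘ A↑ + A⁺_↓ ∘ A↓` are diagonal, with eigenvalues
`(m)_{q²} q^{2n}` and `(n)_{q²}`, since each square root meets itself. Their sum is `(m+n)_{q²}`
by splitting the geometric sum `∑_{k < m+n} q^{2k}` after its first `n` terms.
-/

open Finset

lemma sum_range_pow_two_mul_nonneg {R : Type*} [Semiring R] [LinearOrder R] [IsOrderedRing R]
    [ExistsAddOfLE R] (x : R) (n : ℕ) : 0 ≤ ∑ k ∈ range n, x ^ (2 * k) :=
  sum_nonneg fun k _ => (even_two_mul k).pow_nonneg x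

lemma sum_range_add_pow_two_mul {R : Type*} [CommSemiring R] (x : R) (m n : ℕ) :
    ∑ k ∈ range (m + n), x ^ (2 * k) =
      (∑ k ∈ range m, x ^ (2 * k)) * x ^ (2 * n) + ∑ k ∈ range n, x ^ (2 * k) := by
  rw [add_comm m n, sum_range_add, add_comm, sum_mul]
  simp only [mul_add, pow_add, mul_comm (x ^ (2 * n))]

lemma LinearMap.apply_apply_eq_mul_self_smul {R M : Type*} [Semiring R] [AddCommMonoid M]
    [Module R M] (f g : M →ₗ[R] M) {x y : M} {c : R} (hg : g x = c • y) (hf : f y = c • x) :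
    f (g x) = (c * c) • x := by
  rw [hg, map_smul, hf, smul_smul]

lemma raise_lower_up_single (q : ℝ) (Au Apu : ((ℕ × ℕ) →₀ ℝ) →ₗ[ℝ] ((ℕ × ℕ) →₀ ℝ))
    (hAu0 : ∀ n : ℕ, Au (Finsupp.single (0, n) 1) = 0)
    (hAu : ∀ m n : ℕ, Au (Finsupp.single (m + 1, n) 1) =
      (Real.sqrt (∑ k ∈ range (m + 1), q ^ (2 * k)) * q ^ n) • Finsupp.single (m, n) 1)
    (hApu : ∀ m n : ℕ, Apu (Finsupp.single (m, n) 1) =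
      (Real.sqrt (∑ k ∈ range (m + 1), q ^ (2 * k)) * q ^ n) • Finsupp.single (m + 1, n) 1)
    (m n : ℕ) :
    Apu (Au (Finsupp.single (m, n) 1)) =
      ((∑ k ∈ range m, q ^ (2 * k)) * q ^ (2 * n)) • Finsupp.single (m, n) 1 := by
  cases m with
  | zero => simp [hAu0]
  | succ m =>
    rw [Apu.apply_apply_eq_mul_self_smul Au (hAu m n) (hApu m n), pow_mul']
    congr 1
    rw [mul_mul_mul_comm, Real.mul_self_sqrt (sum_range_pow_two_mul_nonneg q _), sq]

lemma raise_lower_down_single (q : ℝ) (Ad Apd : ((ℕ × ℕ) →₀ ℝ) →ₗ[ℝ] ((ℕ × ℕ) →₀ ℝ))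
    (hAd0 : ∀ m : ℕ, Ad (Finsupp.single (m, 0) 1) = 0)
    (hAd : ∀ m n : ℕ, Ad (Finsupp.single (m, n + 1) 1) =
      Real.sqrt (∑ k ∈ range (n + 1), q ^ (2 * k)) • Finsupp.single (m, n) 1)
    (hApd : ∀ m n : ℕ, Apd (Finsupp.single (m, n) 1) =
      Real.sqrt (∑ k ∈ range (n + 1), q ^ (2 * k)) • Finsupp.single (m, n + 1) 1)
    (m n : ℕ) :
    Apd (Ad (Finsupp.single (m, n) 1)) =
      (∑ k ∈ range n, q ^ (2 * k)) • Finsupp.single (m, n) 1 := by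
  cases n with
  | zero => simp [hAd0]
  | succ n =>
    rw [Apd.apply_apply_eq_mul_self_smul Ad (hAd m n) (hApd m n),
      Real.mul_self_sqrt (sum_range_pow_two_mul_nonneg q _)]

theorem deformed_quadratic_invariant_diagonal_general
    (q : ℝ)
    (Au Ad Apu Apd : ((ℕ × ℕ) →₀ ℝ) →ₗ[ℝ] ((ℕ × ℕ) →₀ ℝ))
    (hAu0 : ∀ n : ℕ, Au (Finsupp.single (0, n) 1) = 0)
    (hAu : ∀ m n : ℕ, Au (Finsupp.single (m + 1, n) 1) =
      (Real.sqrt (∑ k ∈ Finset.range (m + 1), q ^ (2 * k)) * q ^ n) •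
        Finsupp.single (m, n) 1)
    (hApu : ∀ m n : ℕ, Apu (Finsupp.single (m, n) 1) =
      (Real.sqrt (∑ k ∈ Finset.range (m + 1), q ^ (2 * k)) * q ^ n) •
        Finsupp.single (m + 1, n) 1)
    (hAd0 : ∀ m : ℕ, Ad (Finsupp.single (m, 0) 1) = 0)
    (hAd : ∀ m n : ℕ, Ad (Finsupp.single (m, n + 1) 1) =
      Real.sqrt (∑ k ∈ Finset.range (n + 1), q ^ (2 * k)) • Finsupp.single (m, n) 1)
    (hApd : ∀ m n : ℕ, Apd (Finsupp.single (m, n) 1) =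
      Real.sqrt (∑ k ∈ Finset.range (n + 1), q ^ (2 * k)) • Finsupp.single (m, n + 1) 1) :
    ∀ m n : ℕ, (Apu ∘ₗ Au + Apd ∘ₗ Ad) (Finsupp.single (m, n) 1) =
      (∑ k ∈ Finset.range (m + n), q ^ (2 * k)) • Finsupp.single (m, n) 1 := by
  intro m n
  rw [LinearMap.add_apply, LinearMap.comp_apply, LinearMap.comp_apply,
    raise_lower_up_single q Au Apu hAu0 hAu hApu, raise_lower_down_single q Ad Apd hAd0 hAd hApd,
    ← add_smul, sum_range_add_pow_two_mul]

/-- **The deformed quadratic invariant is a function of the total number operator.**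
For `q > 0`, the deformed quadratic U_q(sl(2))-invariant
`I¹_h = A⁺_↑ ∘ A↑ + A⁺_↓ ∘ A↓` acts diagonally on the two-mode Fock basis with
eigenvalue the q²-number of the total occupation number:
`(A⁺_↑ ∘ A↑ + A⁺_↓ ∘ A↓) e_{m,n} = (m+n)_{q²} • e_{m,n}`. -/
theorem deformed_quadratic_invariant_diagonal
    (q : ℝ) (hq : 0 < q)
    (Au Ad Apu Apd : ((ℕ × ℕ) →₀ ℝ) →ₗ[ℝ] ((ℕ × ℕ) →₀ ℝ))
    (hAu0 : ∀ n : ℕ, Au (Finsupp.single (0, n) 1) = 0)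
    (hAu : ∀ m n : ℕ, Au (Finsupp.single (m + 1, n) 1) =
      (Real.sqrt (∑ k ∈ Finset.range (m + 1), q ^ (2 * k)) * q ^ n) •
        Finsupp.single (m, n) 1)
    (hApu : ∀ m n : ℕ, Apu (Finsupp.single (m, n) 1) =
      (Real.sqrt (∑ k ∈ Finset.range (m + 1), q ^ (2 * k)) * q ^ n) •
        Finsupp.single (m + 1, n) 1)
    (hAd0 : ∀ m : ℕ, Ad (Finsupp.single (m, 0) 1) = 0)
    (hAd : ∀ m n : ℕ, Ad (Finsupp.single (m, n + 1) 1) =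
      Real.sqrt (∑ k ∈ Finset.range (n + 1), q ^ (2 * k)) • Finsupp.single (m, n) 1)
    (hApd : ∀ m n : ℕ, Apd (Finsupp.single (m, n) 1) =
      Real.sqrt (∑ k ∈ Finset.range (n + 1), q ^ (2 * k)) • Finsupp.single (m, n + 1) 1) :
    ∀ m n : ℕ, (Apu ∘ₗ Au + Apd ∘ₗ Ad) (Finsupp.single (m, n) 1) =
      (∑ k ∈ Finset.range (m + n), q ^ (2 * k)) • Finsupp.single (m, n) 1 :=
  deformed_quadratic_invariant_diagonal_general q Au Ad Apu Apd hAu0 hAu hApu hAd0 hAd hApd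
end

section
/- Let K be a field of characteristic 0 and q ∈ K with q ≠ 0. In the setting of the fermionic CAR algebra with Fiore's deformed fermionic generators, the deformed annihilation and deformed creation operators satisfy the q-deformed Pusz–Woronowicz exchange relations: A↑² = 0, A↓² = 0, (A⁺_↑)² = 0, (A⁺_↓)² = 0, A↑·A↓ + q⁻¹·A↓·A↑ = 0, and A⁺_↑·A⁺_↓ + q·A⁺_↓·A⁺_↑ = 0. -/
/-!
Write `e := 1 + (q⁻¹ - 1) • (a↓ a⁺_↓)` for `q^{-n↓}`. Being built from the `↓` mode, `e`
commutes with `a↑` and `a⁺_↑`, which anticommute with both `a↓` and `a⁺_↓`. Within the `↓`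
mode the CAR give `a↓ a⁺_↓ a↓ = a↓` and `a⁺_↓ a↓ a⁺_↓ = a⁺_↓`, so `e a↓ = q⁻¹ a↓`,
`a⁺_↓ e = q⁻¹ a⁺_↓`, `a↓ e = a↓` and `e a⁺_↓ = a⁺_↓`. Moving `e` through each product with
these rules reduces every relation to a square or an anticommutator of undeformed generators;
the squares vanish because `x x + x x = 0` and `2` is invertible.
-/

theorem eq_zero_of_add_self_eq_zero (K : Type*) {M : Type*} [DivisionRing K] [NeZero (2 : K)]
    [AddCommGroup M] [Module K M] {x : M} (h : x + x = 0) : x = 0 := by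
  rw [← two_smul K, smul_eq_zero] at h
  exact h.resolve_left two_ne_zero

section Ring

variable {R : Type*} [Ring R]

theorem commute_mul_of_anticommute {a p x : R} (ha : a * x + x * a = 0)
    (hp : p * x + x * p = 0) : Commute (a * p) x :=
  calc a * p * x = a * (p * x) := mul_assoc a p x
    _ = -(a * x * p) := by rw [eq_neg_of_add_eq_zero_left hp, mul_neg, mul_assoc]
    _ = x * (a * p) := by rw [eq_neg_of_add_eq_zero_left ha, neg_mul, neg_neg, mul_assoc]

theorem mul_mul_eq_self_of_car_left {a p : R} (haa : a * a = 0) (hap : a * p + p * a = 1) :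
    a * p * a = a := by
  rw [mul_assoc, eq_sub_of_add_eq' hap, mul_sub, mul_one, ← mul_assoc, haa, zero_mul, sub_zero]

theorem mul_mul_eq_self_of_car_right {a p : R} (hpp : p * p = 0) (hap : a * p + p * a = 1) :
    p * (a * p) = p := by
  rw [eq_sub_of_add_eq hap, mul_sub, mul_one, ← mul_assoc, hpp, zero_mul, sub_zero]

variable {K : Type*} [CommRing K] [Algebra K R] (t : K)

theorem commute_one_add_smul_mul_of_anticommute {a p x : R} (ha : a * x + x * a = 0)
    (hp : p * x + x * p = 0) : Commute (1 + (t - 1) • (a * p)) x :=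
  (Commute.one_left x).add_left ((commute_mul_of_anticommute ha hp).smul_left _)

theorem one_add_smul_mul_mul_left {a p : R} (haa : a * a = 0) (hap : a * p + p * a = 1) :
    (1 + (t - 1) • (a * p)) * a = t • a := by
  rw [add_mul, one_mul, smul_mul_assoc, mul_mul_eq_self_of_car_left haa hap, sub_smul, one_smul,
    add_sub_cancel]

theorem mul_one_add_smul_mul_right {a p : R} (hpp : p * p = 0) (hap : a * p + p * a = 1) :
    p * (1 + (t - 1) • (a * p)) = t • p := by
  rw [mul_add, mul_one, mul_smul_comm, mul_mul_eq_self_of_car_right hpp hap, sub_smul, one_smul,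
    add_sub_cancel]

theorem mul_one_add_smul_mul_of_mul_self_eq_zero {a : R} (p : R) (haa : a * a = 0) :
    a * (1 + (t - 1) • (a * p)) = a := by
  rw [mul_add, mul_one, mul_smul_comm, ← mul_assoc, haa, zero_mul, smul_zero, add_zero]

theorem one_add_smul_mul_mul_of_mul_self_eq_zero (a : R) {p : R} (hpp : p * p = 0) :
    (1 + (t - 1) • (a * p)) * p = p := by
  rw [add_mul, one_mul, smul_mul_assoc, mul_assoc, hpp, mul_zero, smul_zero, add_zero]

end Ring

/-- **Quadratic q-exchange relations for Fiore's deformed fermionic generators.**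
In a unital associative algebra over a field `K` of characteristic 0 with elements
`a↑ = a true`, `a↓ = a false`, `a⁺_↑ = ap true`, `a⁺_↓ = ap false` satisfying the CAR,
the deformed generators `A⁺_↑ = q^{-n↓} a⁺_↑`, `A↑ = a↑ q^{-n↓}`, `A⁺_↓ = a⁺_↓`,
`A↓ = a↓` (with `n↓ = a↓ a⁺_↓` and `q^{-n↓} = 1 + (q⁻¹ - 1) • n↓`) satisfy the
q-deformed Pusz–Woronowicz exchange relations: all squares vanish,
`A↑ A↓ + q⁻¹ A↓ A↑ = 0` and `A⁺_↑ A⁺_↓ + q A⁺_↓ A⁺_↑ = 0`. -/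
theorem deformed_fermionic_quadratic_relations
    (K : Type*) [Field K] [CharZero K] (𝒜 : Type*) [Ring 𝒜] [Algebra K 𝒜]
    (q : K) (hq : q ≠ 0) (a ap : Bool → 𝒜)
    (haa : ∀ i j, a i * a j + a j * a i = 0)
    (hpp : ∀ i j, ap i * ap j + ap j * ap i = 0)
    (hap : ∀ i j, a i * ap j + ap j * a i = if i = j then 1 else 0) :
    let qn : 𝒜 := 1 + (q⁻¹ - 1) • (a false * ap false)
    let Apu : 𝒜 := qn * ap true
    let Au : 𝒜 := a true * qn
    let Apd : 𝒜 := ap false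
    let Ad : 𝒜 := a false
    Au * Au = 0 ∧ Ad * Ad = 0 ∧ Apu * Apu = 0 ∧ Apd * Apd = 0 ∧
      Au * Ad + q⁻¹ • (Ad * Au) = 0 ∧ Apu * Apd + q • (Apd * Apu) = 0 := by
  have hsq : ∀ x : 𝒜, x * x + x * x = 0 → x * x = 0 := fun x ↦ eq_zero_of_add_self_eq_zero K
  have hcar_down : a false * ap false + ap false * a false = 1 := by simpa using hap false false
  have had_sq := hsq _ (haa false false)
  have hapd_sq := hsq _ (hpp false false)
  have he_au : Commute (1 + (q⁻¹ - 1) • (a false * ap false)) (a true) :=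
    commute_one_add_smul_mul_of_anticommute q⁻¹ (haa false true)
      (by simpa [add_comm] using hap true false)
  have he_pu : Commute (1 + (q⁻¹ - 1) • (a false * ap false)) (ap true) :=
    commute_one_add_smul_mul_of_anticommute q⁻¹ (by simpa using hap false true) (hpp false true)
  dsimp only
  refine ⟨?_, had_sq, ?_, hapd_sq, ?_, ?_⟩
  · rw [he_au.mul_mul_mul_comm, hsq _ (haa true true), zero_mul]
  · rw [he_pu.symm.mul_mul_mul_comm, hsq _ (hpp true true), mul_zero]
  · rw [mul_assoc, one_add_smul_mul_mul_left _ had_sq hcar_down, mul_smul_comm, ← he_au.eq, ← mul_assoc,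
      mul_one_add_smul_mul_of_mul_self_eq_zero _ _ had_sq, ← smul_add, haa, smul_zero]
  · rw [← mul_assoc (ap false), mul_one_add_smul_mul_right _ hapd_sq hcar_down, smul_mul_assoc, smul_smul,
      mul_inv_cancel₀ hq, one_smul, he_pu.eq, mul_assoc,
      one_add_smul_mul_mul_of_mul_self_eq_zero _ _ hapd_sq, hpp]
end

section
/- Let K be a field of characteristic 0 and q ∈ K with q ≠ 0. In the setting of the fermionic CAR algebra with Fiore's deformed fermionic generators, the mixed deformed generators satisfy the q-exchange relations A↑·A⁺_↓ + q·A⁺_↓·A↑ = 0 and A↓·A⁺_↑ + q·A⁺_↑·A↓ = 0. -/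
/-!
Write `n = a↓ a⁺_↓` and `t = q⁻¹`. Since `a↓² = a⁺_↓² = 0`, the CAR give `n a⁺_↓ = 0`,
`a⁺_↓ n = a⁺_↓`, `a↓ n = 0` and `n a↓ = a↓`, so `q^{-n↓} = 1 + (t - 1) n` is invisible on one side
of `a↓`, `a⁺_↓` and scales them by `t` on the other. Moreover `a⁺_↑` anticommutes with `a↓` and
`a⁺_↓`, hence commutes with `n` and with `q^{-n↓}`. Moving `q^{-n↓}` across `a↓` or `a⁺_↓` thus
produces a factor `q⁻¹` that cancels the `q` of the exchange relation, which then reduces to an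
undeformed anticommutator of the CAR with distinct indices.
-/

section FermionicMode

variable {R : Type*} [Ring R] {a b : R}

theorem mul_mul_eq_right_of_add_eq_one (hab : a * b + b * a = 1) (hb : b * b = 0) :
    b * (a * b) = b := by
  rw [← mul_assoc, eq_sub_of_add_eq' hab, sub_mul, one_mul, mul_assoc, hb, mul_zero, sub_zero]

theorem mul_mul_eq_left_of_add_eq_one (hab : a * b + b * a = 1) (ha : a * a = 0) :
    a * b * a = a := by
  rw [mul_assoc, eq_sub_of_add_eq' hab, mul_sub, mul_one, ← mul_assoc, ha, zero_mul, sub_zero]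

theorem commute_mul_of_add_eq_zero {x : R} (hxa : a * x + x * a = 0) (hxb : b * x + x * b = 0) :
    Commute x (a * b) := by
  rw [Commute, SemiconjBy, ← mul_assoc, eq_neg_of_add_eq_zero_right hxa, neg_mul, mul_assoc,
    eq_neg_of_add_eq_zero_right hxb, mul_neg, neg_neg, mul_assoc]

end FermionicMode

section IdempotentPow

variable {K R : Type*} [Field K] [Ring R] [Algebra K R]

/-- `t ^ n` for an idempotent `n`; with `t = q⁻¹` and `n = n↓` this is Fiore's `q^{-n↓}`. -/
def idempotentPow (t : K) (n : R) : R := 1 + (t - 1) • n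

variable {t : K} {n x : R}

theorem idempotentPow_mul_of_mul_eq_zero (h : n * x = 0) : idempotentPow t n * x = x := by
  rw [idempotentPow, add_mul, one_mul, smul_mul_assoc, h, smul_zero, add_zero]

theorem mul_idempotentPow_of_mul_eq_zero (h : x * n = 0) : x * idempotentPow t n = x := by
  rw [idempotentPow, mul_add, mul_one, mul_smul_comm, h, smul_zero, add_zero]

theorem idempotentPow_mul_of_mul_eq_self (h : n * x = x) : idempotentPow t n * x = t • x := by
  rw [idempotentPow, add_mul, one_mul, smul_mul_assoc, h, sub_smul, one_smul, add_sub_cancel]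

theorem mul_idempotentPow_of_mul_eq_self (h : x * n = x) : x * idempotentPow t n = t • x := by
  rw [idempotentPow, mul_add, mul_one, mul_smul_comm, h, sub_smul, one_smul, add_sub_cancel]

theorem Commute.idempotentPow_right (h : Commute x n) : Commute x (idempotentPow t n) :=
  (Commute.one_right x).add_right (h.smul_right _)

end IdempotentPow

section DeformedExchange

variable {K R : Type*} [Field K] [Ring R] [Algebra K R] {q : K} {a b : R}

theorem qExchange_creation_of_anticommute (hq : q ≠ 0) (hab : a * b + b * a = 1)
    (hb : b * b = 0) {y : R} (hyb : y * b + b * y = 0) :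
    y * idempotentPow q⁻¹ (a * b) * b + q • (b * (y * idempotentPow q⁻¹ (a * b))) = 0 := by
  have hPb : idempotentPow q⁻¹ (a * b) * b = b :=
    idempotentPow_mul_of_mul_eq_zero (by rw [mul_assoc, hb, mul_zero])
  have hbP : b * idempotentPow q⁻¹ (a * b) = q⁻¹ • b :=
    mul_idempotentPow_of_mul_eq_self (mul_mul_eq_right_of_add_eq_one hab hb)
  rw [mul_assoc, hPb, ← mul_assoc, eq_neg_of_add_eq_zero_right hyb, neg_mul, mul_assoc, hbP,
    mul_smul_comm, smul_neg, smul_smul, mul_inv_cancel₀ hq, one_smul, add_neg_cancel]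

theorem qExchange_annihilation_of_anticommute (hq : q ≠ 0) (hab : a * b + b * a = 1)
    (ha : a * a = 0) {x : R} (hxa : a * x + x * a = 0) (hxb : b * x + x * b = 0) :
    a * (idempotentPow q⁻¹ (a * b) * x) + q • (idempotentPow q⁻¹ (a * b) * x * a) = 0 := by
  have haP : a * idempotentPow q⁻¹ (a * b) = a :=
    mul_idempotentPow_of_mul_eq_zero (by rw [← mul_assoc, ha, zero_mul])
  have hPa : idempotentPow q⁻¹ (a * b) * a = q⁻¹ • a :=
    idempotentPow_mul_of_mul_eq_self (mul_mul_eq_left_of_add_eq_one hab ha)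
  rw [← mul_assoc, haP, ← ((commute_mul_of_add_eq_zero hxa hxb).idempotentPow_right).eq, mul_assoc,
    hPa, mul_smul_comm, smul_smul, mul_inv_cancel₀ hq, one_smul, hxa]

end DeformedExchange

/-- Here `a true`, `a false`, `ap true`, `ap false` stand for `a↑`, `a↓`, `a⁺_↑`, `a⁺_↓`. -/
theorem deformed_fermionic_mixed_relations
    (K : Type*) [Field K] [CharZero K] (𝒜 : Type*) [Ring 𝒜] [Algebra K 𝒜]
    (q : K) (hq : q ≠ 0) (a ap : Bool → 𝒜)
    (haa : ∀ i j, a i * a j + a j * a i = 0)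
    (hpp : ∀ i j, ap i * ap j + ap j * ap i = 0)
    (hap : ∀ i j, a i * ap j + ap j * a i = if i = j then 1 else 0) :
    let qn : 𝒜 := 1 + (q⁻¹ - 1) • (a false * ap false)
    let Apu : 𝒜 := qn * ap true
    let Au : 𝒜 := a true * qn
    let Apd : 𝒜 := ap false
    let Ad : 𝒜 := a false
    Au * Apd + q • (Apd * Au) = 0 ∧ Ad * Apu + q • (Apu * Ad) = 0 := by
  have eq_zero_of_add_self : ∀ x : 𝒜, x + x = 0 → x = 0 := fun x h =>
    (smul_eq_zero.mp (by rwa [two_smul] : (2 : K) • x = 0)).resolve_left two_ne_zero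
  have hcar : a false * ap false + ap false * a false = 1 := by simpa using hap false false
  exact ⟨qExchange_creation_of_anticommute hq hcar (eq_zero_of_add_self _ (hpp false false))
      (by simpa using hap true false),
    qExchange_annihilation_of_anticommute hq hcar (eq_zero_of_add_self _ (haa false false))
      (by simpa using hap false true) (hpp false true)⟩
end
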